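/- arXiv:2601.07511 — 5 statements merged into one kernel-verified Lean document; each statement's English description precedes it below -/
import Mathlib

section
/- For real numbers a, b, t > 0 with t ≠ 1, the minimum over integers n of f(n) = a·t^n + b·t^{-n} is at most (sqrt(t) + 1/sqrt(t))·sqrt(a·b). -/
lemma key_ineq {s u : ℝ} (hs : 0 < s) (hu : 0 < u) (h1 : 1/u ≤ s) (h2 : s ≤ u) :
    s + 1/s ≤ u + 1/u := by
  rw [div_le_iff₀ hu] at h1
  have h3 : 0 ≤ (u - s) * (s * u - 1) := by
    apply mul_nonneg <;> linarith
  rw [← sub_nonneg]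
  have e : u + 1/u - (s + 1/s) = ((u - s) * (s * u - 1)) / (s * u) := by
    field_simp; ring
  rw [e]
  positivity

lemma aux_min (a b t : ℝ) (ha : 0 < a) (hb : 0 < b) (ht : 1 < t) :
    ∃ n : ℤ, a * t ^ n + b * t ^ (-n) ≤
      (Real.sqrt t + 1 / Real.sqrt t) * Real.sqrt (a * b) := by
  have ht0 : 0 < t := lt_trans one_pos ht
  set c := Real.sqrt (a / b) with hcdef
  have hc : 0 < c := Real.sqrt_pos.2 (by positivity)
  refine ⟨round (-(Real.logb t c)), ?_⟩
  set n := round (-(Real.logb t c)) with hn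
  have hround : |(-(Real.logb t c)) - (n : ℝ)| ≤ 1/2 := abs_sub_round _
  have habs := abs_le.1 hround
  set s := c * t ^ n with hs
  have htn : (0:ℝ) < t ^ n := zpow_pos ht0 n
  have hsp : 0 < s := by positivity
  have hsr : s = t ^ (Real.logb t c + (n:ℝ)) := by
    rw [Real.rpow_add ht0, Real.rpow_logb ht0 (ne_of_gt ht) hc, Real.rpow_intCast]
  have hstq : Real.sqrt t = t ^ (1/2 : ℝ) := Real.sqrt_eq_rpow t
  have hsqp : 0 < Real.sqrt t := Real.sqrt_pos.2 ht0
  have h2 : s ≤ Real.sqrt t := by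
    rw [hsr, hstq]
    exact (Real.rpow_le_rpow_left_iff ht).2 (by linarith [habs.1])
  have h1 : 1 / Real.sqrt t ≤ s := by
    have : (1:ℝ) / Real.sqrt t = t ^ (-(1/2) : ℝ) := by
      rw [hstq, Real.rpow_neg ht0.le, one_div]
    rw [this, hsr]
    exact (Real.rpow_le_rpow_left_iff ht).2 (by linarith [habs.2])
  have hk := key_ineq hsp hsqp h1 h2
  have hab : Real.sqrt (a * b) = Real.sqrt a * Real.sqrt b := Real.sqrt_mul ha.le b
  have hcab : c = Real.sqrt a / Real.sqrt b := Real.sqrt_div ha.le b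
  have hsa : 0 < Real.sqrt a := Real.sqrt_pos.2 ha
  have hsb : 0 < Real.sqrt b := Real.sqrt_pos.2 hb
  have ea : Real.sqrt a * Real.sqrt a = a := Real.mul_self_sqrt ha.le
  have eb : Real.sqrt b * Real.sqrt b = b := Real.mul_self_sqrt hb.le
  have e1 : Real.sqrt (a * b) * s = a * t ^ n := by
    rw [hab, hs, hcab]
    field_simp
    linear_combination ea
  have e2 : Real.sqrt (a * b) * (1 / s) = b * t ^ (-n) := by
    rw [hab, hs, hcab, zpow_neg]
    field_simp
    linear_combination eb
  calc a * t ^ n + b * t ^ (-n) = Real.sqrt (a * b) * (s + 1/s) := by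
        rw [mul_add, e1, e2]
    _ ≤ Real.sqrt (a * b) * (Real.sqrt t + 1 / Real.sqrt t) :=
        mul_le_mul_of_nonneg_left hk (Real.sqrt_nonneg _)
    _ = (Real.sqrt t + 1 / Real.sqrt t) * Real.sqrt (a * b) := mul_comm _ _

theorem min_exp_combination_le
    (a b t : ℝ) (ha : 0 < a) (hb : 0 < b) (ht : 0 < t) (ht1 : t ≠ 1) :
    ∃ n : ℤ, a * t ^ n + b * t ^ (-n) ≤
      (Real.sqrt t + 1 / Real.sqrt t) * Real.sqrt (a * b) := by
  rcases ht1.lt_or_gt with h | h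
  · have ht' : 1 < t⁻¹ := (one_lt_inv₀ ht).2 h
    obtain ⟨n, hn⟩ := aux_min a b t⁻¹ ha hb ht'
    refine ⟨-n, ?_⟩
    have e1 : (t⁻¹ : ℝ) ^ n = t ^ (-n) := by rw [inv_zpow, zpow_neg]
    have e2 : (t⁻¹ : ℝ) ^ (-n) = t ^ (-(-n)) := by simp [inv_zpow, zpow_neg]
    have e3 : Real.sqrt t⁻¹ = (Real.sqrt t)⁻¹ := Real.sqrt_inv t
    rw [e1, e2, e3] at hn
    have hsq : 0 < Real.sqrt t := Real.sqrt_pos.2 ht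
    calc a * t ^ (-n) + b * t ^ (-(-n))
        ≤ ((Real.sqrt t)⁻¹ + 1 / (Real.sqrt t)⁻¹) * Real.sqrt (a * b) := hn
      _ = (Real.sqrt t + 1 / Real.sqrt t) * Real.sqrt (a * b) := by
          rw [one_div, inv_inv, one_div, add_comm]
  · exact aux_min a b t ha hb h
end

section
/- Let I = (α) be a nonzero principal ideal of ℤ[√2]. Then there exists a generator α' of I such that for every nonzero γ ∈ I, α'^2 + τ(α')^2 ≤ γ^2 + τ(γ)^2, where τ is the conjugation √2 ↦ -√2. That is, the shortest nonzero vector of the ideal lattice of I under the canonical embedding can be chosen to be a generator of I. -/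
/-- The real embedding of `ℤ√2` sending `√2` to `Real.sqrt 2`. -/
noncomputable def Zsqrtd.toReal2 (z : Zsqrtd 2) : ℝ := z.re + z.im * Real.sqrt 2

/-- The conjugate real embedding of `ℤ√2` sending `√2` to `-Real.sqrt 2`. -/
noncomputable def Zsqrtd.toReal2' (z : Zsqrtd 2) : ℝ := z.re - z.im * Real.sqrt 2

/-- The squared length of `z ∈ ℤ√2` under the canonical embedding `z ↦ (z, τ z)`. -/
noncomputable def Zsqrtd.lenSq2 (z : Zsqrtd 2) : ℝ :=
  Zsqrtd.toReal2 z ^ 2 + Zsqrtd.toReal2' z ^ 2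

lemma sqrt2_sq : Real.sqrt 2 ^ 2 = 2 := Real.sq_sqrt (by norm_num)

lemma toReal2_mul (z w : Zsqrtd 2) :
    (z * w).toReal2 = z.toReal2 * w.toReal2 := by
  simp only [Zsqrtd.toReal2, Zsqrtd.re_mul, Zsqrtd.im_mul]
  push_cast
  linear_combination (-(z.im * w.im) : ℝ) * sqrt2_sq

lemma toReal2'_mul (z w : Zsqrtd 2) :
    (z * w).toReal2' = z.toReal2' * w.toReal2' := by
  simp only [Zsqrtd.toReal2', Zsqrtd.re_mul, Zsqrtd.im_mul]
  push_cast
  linear_combination (-(z.im * w.im) : ℝ) * sqrt2_sq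

lemma toReal2_mul_toReal2' (z : Zsqrtd 2) :
    z.toReal2 * z.toReal2' = ((z.norm : ℤ) : ℝ) := by
  simp only [Zsqrtd.toReal2, Zsqrtd.toReal2', Zsqrtd.norm_def]
  push_cast
  linear_combination (-(z.im^2) : ℝ) * sqrt2_sq

lemma lenSq2_eq_int (z : Zsqrtd 2) :
    z.lenSq2 = ((2 * z.re ^ 2 + 4 * z.im ^ 2 : ℤ) : ℝ) := by
  simp only [Zsqrtd.lenSq2, Zsqrtd.toReal2, Zsqrtd.toReal2']
  push_cast
  linear_combination (2 * (z.im:ℝ)^2) * sqrt2_sq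

lemma two_nonsquare : ∀ n : ℤ, (2:ℤ) ≠ n * n := by
  intro n h
  have h' : n.natAbs * n.natAbs = 2 := by
    rw [← Int.natAbs_mul, ← h]; rfl
  rcases hm : n.natAbs with _ | _ | k <;> rw [hm] at h' <;> nlinarith

instance : NoZeroDivisors (Zsqrtd 2) where
  eq_zero_or_eq_zero_of_mul_eq_zero {a b} h := by
    have h2 := congrArg Zsqrtd.norm h
    rw [Zsqrtd.norm_mul] at h2
    rcases mul_eq_zero.1 (h2.trans (by simp)) with h' | h'
    · exact Or.inl ((Zsqrtd.norm_eq_zero two_nonsquare a).1 h')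
    · exact Or.inr ((Zsqrtd.norm_eq_zero two_nonsquare b).1 h')

instance : IsDomain (Zsqrtd 2) := NoZeroDivisors.to_isDomain _

lemma toReal2_ne_zero {z : Zsqrtd 2} (hz : z ≠ 0) :
    z.toReal2 ≠ 0 ∧ z.toReal2' ≠ 0 := by
  have hn : (z.norm : ℤ) ≠ 0 := fun h => hz ((Zsqrtd.norm_eq_zero two_nonsquare z).1 h)
  have : z.toReal2 * z.toReal2' ≠ 0 := by
    rw [toReal2_mul_toReal2']; exact_mod_cast hn
  exact ⟨left_ne_zero_of_mul this, right_ne_zero_of_mul this⟩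

lemma unit1 : (⟨-1, 1⟩ : Zsqrtd 2) * ⟨1, 1⟩ = 1 := by
  ext <;> simp [Zsqrtd.re_mul, Zsqrtd.im_mul]

lemma isUnit1 : IsUnit ((⟨-1, 1⟩ : Zsqrtd 2)) := IsUnit.of_mul_eq_one _ unit1
lemma isUnit2 : IsUnit ((⟨1, 1⟩ : Zsqrtd 2)) :=
  IsUnit.of_mul_eq_one _ (by rw [mul_comm]; exact unit1)

lemma span_mul_unit (α u : Zsqrtd 2) (hu : IsUnit u) :
    Ideal.span ({α * u} : Set (Zsqrtd 2)) = Ideal.span {α} :=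
  Ideal.span_singleton_eq_span_singleton.2 (Associated.symm ⟨hu.unit, by simp⟩)

lemma norm_unit1 : (⟨-1, 1⟩ : Zsqrtd 2).norm = -1 := by
  simp [Zsqrtd.norm_def]
lemma norm_unit2 : (⟨1, 1⟩ : Zsqrtd 2).norm = -1 := by
  simp [Zsqrtd.norm_def]

lemma toReal2_u1 : (⟨-1, 1⟩ : Zsqrtd 2).toReal2 = Real.sqrt 2 - 1 := by
  simp [Zsqrtd.toReal2]; ring
lemma toReal2'_u1 : (⟨-1, 1⟩ : Zsqrtd 2).toReal2' = -1 - Real.sqrt 2 := by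
  simp [Zsqrtd.toReal2']
lemma toReal2_u2 : (⟨1, 1⟩ : Zsqrtd 2).toReal2 = 1 + Real.sqrt 2 := by
  simp [Zsqrtd.toReal2]
lemma toReal2'_u2 : (⟨1, 1⟩ : Zsqrtd 2).toReal2' = 1 - Real.sqrt 2 := by
  simp [Zsqrtd.toReal2']

set_option maxHeartbeats 1600000 in
lemma balancedAux : ∀ n : ℕ, ∀ α : Zsqrtd 2, α ≠ 0 →
    (2 * α.re ^ 2 + 4 * α.im ^ 2).toNat ≤ n →
    ∃ α', Ideal.span ({α'} : Set (Zsqrtd 2)) = Ideal.span {α} ∧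
      Zsqrtd.lenSq2 α' ≤ 2 * Real.sqrt 2 * |((α.norm : ℤ) : ℝ)| := by
  intro n
  induction n with
  | zero =>
      intro α hα hL
      exfalso
      have h1 : α.re ≠ 0 ∨ α.im ≠ 0 := by
        by_contra h; push_neg at h
        exact hα (Zsqrtd.ext h.1 h.2)
      have h2 : 0 < 2 * α.re ^ 2 + 4 * α.im ^ 2 := by
        rcases h1 with h | h
        · nlinarith [sq_nonneg α.im, sq_nonneg α.re, Int.one_le_abs (by exact_mod_cast h : α.re ≠ 0), sq_abs α.re, abs_nonneg α.re]
        · nlinarith [sq_nonneg α.im, sq_nonneg α.re, Int.one_le_abs (by exact_mod_cast h : α.im ≠ 0), sq_abs α.im, abs_nonneg α.im]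
      omega
  | succ n ih =>
      intro α hα hL
      have hs : Real.sqrt 2 ^ 2 = 2 := sqrt2_sq
      have hs0 : (0:ℝ) < Real.sqrt 2 := Real.sqrt_pos.2 (by norm_num)
      set s := Real.sqrt 2 with hsdef
      obtain ⟨ha, hb⟩ := toReal2_ne_zero hα
      set a := α.toReal2 with hadef
      set b := α.toReal2' with hbdef
      have hab : a * b = ((α.norm : ℤ) : ℝ) := toReal2_mul_toReal2' α
      by_cases hbal : |a| ≤ (1 + s) * |b| ∧ |b| ≤ (1 + s) * |a|
      · refine ⟨α, rfl, ?_⟩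
        rw [← hab, abs_mul]
        have key := mul_nonneg (sub_nonneg.2 hbal.1) (sub_nonneg.2 hbal.2)
        have h1 : Zsqrtd.lenSq2 α = a ^ 2 + b ^ 2 := rfl
        rw [h1]
        nlinarith [sq_abs a, sq_abs b, abs_nonneg a, abs_nonneg b,
          mul_nonneg (abs_nonneg a) (abs_nonneg b)]
      · rcases not_and_or.1 hbal with h | h <;> push_neg at h
        -- case |a| > (1+s)|b| : multiply by sqrt2 - 1
        · set β := α * ⟨-1, 1⟩ with hβdef
          have hβ0 : β ≠ 0 := mul_ne_zero hα isUnit1.ne_zero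
          have ta : β.toReal2 = a * (s - 1) := by
            rw [hβdef, toReal2_mul, toReal2_u1]
          have tb : β.toReal2' = b * (-1 - s) := by
            rw [hβdef, toReal2'_mul, toReal2'_u1]
          have hlt : Zsqrtd.lenSq2 β < Zsqrtd.lenSq2 α := by
            have e1 : Zsqrtd.lenSq2 β = (a * (s-1)) ^ 2 + (b * (-1-s)) ^ 2 := by
              rw [Zsqrtd.lenSq2, ta, tb]
            have e2 : Zsqrtd.lenSq2 α = a ^ 2 + b ^ 2 := rfl
            rw [e1, e2]
            have key : ((1+s) * |b|) * ((1+s) * |b|) < |a| * |a| :=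
              mul_self_lt_mul_self (by positivity) h
            have ha2 : (1+s)^2 * b^2 < a^2 := by nlinarith [key, sq_abs a, sq_abs b]
            have hs1 : (0:ℝ) < s - 1 := by nlinarith [hs, hs0]
            have step := mul_lt_mul_of_pos_left ha2 hs1
            have e3 : (s-1)*((1+s)^2*b^2) = (s+1)*b^2 := by
              linear_combination ((s+1)*b^2) * hs
            have e4 : (a*(s-1))^2 + (b*(-1-s))^2 = (3 - 2*s)*a^2 + (3+2*s)*b^2 := by
              linear_combination (a^2 + b^2) * hs
            rw [e4]
            rw [e3] at step
            nlinarith [step]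
          have hint : 2 * β.re ^ 2 + 4 * β.im ^ 2 < 2 * α.re ^ 2 + 4 * α.im ^ 2 := by
            have := hlt
            rw [lenSq2_eq_int, lenSq2_eq_int] at this
            exact_mod_cast this
          have hβnn : (0:ℤ) ≤ 2 * β.re ^ 2 + 4 * β.im ^ 2 := by positivity
          obtain ⟨α', hspan, hbound⟩ := ih β hβ0 (by omega)
          refine ⟨α', hspan.trans (span_mul_unit α _ isUnit1), ?_⟩
          have hnorm : |((β.norm : ℤ) : ℝ)| = |((α.norm : ℤ) : ℝ)| := by
            rw [hβdef, Zsqrtd.norm_mul, norm_unit1]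
            push_cast
            rw [mul_neg_one, abs_neg]
          rwa [hnorm] at hbound
        -- case |b| > (1+s)|a| : multiply by 1 + sqrt2
        · set β := α * ⟨1, 1⟩ with hβdef
          have hβ0 : β ≠ 0 := mul_ne_zero hα isUnit2.ne_zero
          have ta : β.toReal2 = a * (1 + s) := by
            rw [hβdef, toReal2_mul, toReal2_u2]
          have tb : β.toReal2' = b * (1 - s) := by
            rw [hβdef, toReal2'_mul, toReal2'_u2]
          have hlt : Zsqrtd.lenSq2 β < Zsqrtd.lenSq2 α := by
            have e1 : Zsqrtd.lenSq2 β = (a * (1+s)) ^ 2 + (b * (1-s)) ^ 2 := by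
              rw [Zsqrtd.lenSq2, ta, tb]
            have e2 : Zsqrtd.lenSq2 α = a ^ 2 + b ^ 2 := rfl
            rw [e1, e2]
            have key : ((1+s) * |a|) * ((1+s) * |a|) < |b| * |b| :=
              mul_self_lt_mul_self (by positivity) h
            have ha2 : (1+s)^2 * a^2 < b^2 := by nlinarith [key, sq_abs a, sq_abs b]
            have hs1 : (0:ℝ) < s - 1 := by nlinarith [hs, hs0]
            have step := mul_lt_mul_of_pos_left ha2 hs1
            have e3 : (s-1)*((1+s)^2*a^2) = (s+1)*a^2 := by
              linear_combination ((s+1)*a^2) * hs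
            have e4 : (a*(1+s))^2 + (b*(1-s))^2 = (3 + 2*s)*a^2 + (3-2*s)*b^2 := by
              linear_combination (a^2 + b^2) * hs
            rw [e4]
            rw [e3] at step
            nlinarith [step]
          have hint : 2 * β.re ^ 2 + 4 * β.im ^ 2 < 2 * α.re ^ 2 + 4 * α.im ^ 2 := by
            have := hlt
            rw [lenSq2_eq_int, lenSq2_eq_int] at this
            exact_mod_cast this
          have hβnn : (0:ℤ) ≤ 2 * β.re ^ 2 + 4 * β.im ^ 2 := by positivity
          obtain ⟨α', hspan, hbound⟩ := ih β hβ0 (by omega)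
          refine ⟨α', hspan.trans (span_mul_unit α _ isUnit2), ?_⟩
          have hnorm : |((β.norm : ℤ) : ℝ)| = |((α.norm : ℤ) : ℝ)| := by
            rw [hβdef, Zsqrtd.norm_mul, norm_unit2]
            push_cast
            rw [mul_neg_one, abs_neg]
          rwa [hnorm] at hbound

theorem ideal_Zsqrt2_has_shortest_generator
    (α : Zsqrtd 2) (hα : α ≠ 0) :
    ∃ α' : Zsqrtd 2,
      Ideal.span ({α'} : Set (Zsqrtd 2)) = Ideal.span ({α} : Set (Zsqrtd 2)) ∧
      ∀ γ ∈ Ideal.span ({α} : Set (Zsqrtd 2)), γ ≠ 0 →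
        Zsqrtd.lenSq2 α' ≤ Zsqrtd.lenSq2 γ := by
  classical
  have hex : ∃ n : ℕ, ∃ γ : Zsqrtd 2, γ ∈ Ideal.span ({α} : Set (Zsqrtd 2)) ∧ γ ≠ 0 ∧
      (2 * γ.re ^ 2 + 4 * γ.im ^ 2).toNat = n :=
    ⟨_, α, Ideal.mem_span_singleton_self α, hα, rfl⟩
  obtain ⟨γ, hγI, hγ0, hγn⟩ := Nat.find_spec hex
  have hmin : ∀ δ ∈ Ideal.span ({α} : Set (Zsqrtd 2)), δ ≠ 0 →
      Zsqrtd.lenSq2 γ ≤ Zsqrtd.lenSq2 δ := by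
    intro δ hδ hδ0
    have h1 : Nat.find hex ≤ (2 * δ.re ^ 2 + 4 * δ.im ^ 2).toNat :=
      Nat.find_min' hex ⟨δ, hδ, hδ0, rfl⟩
    rw [lenSq2_eq_int, lenSq2_eq_int]
    have hγnn : (0:ℤ) ≤ 2 * γ.re ^ 2 + 4 * γ.im ^ 2 := by positivity
    have hδnn : (0:ℤ) ≤ 2 * δ.re ^ 2 + 4 * δ.im ^ 2 := by positivity
    have h2 : 2 * γ.re ^ 2 + 4 * γ.im ^ 2 ≤ 2 * δ.re ^ 2 + 4 * δ.im ^ 2 := by omega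
    exact_mod_cast h2
  obtain ⟨β, hβeq⟩ := Ideal.mem_span_singleton'.1 hγI
  -- hβeq : β * α = γ
  by_cases hu : IsUnit β
  · refine ⟨γ, ?_, hmin⟩
    rw [← hβeq, mul_comm]
    exact span_mul_unit α β hu
  · exfalso
    have hβ0 : β ≠ 0 := by
      intro h; rw [h, zero_mul] at hβeq; exact hγ0 hβeq.symm
    have hnormβ : 2 ≤ β.norm.natAbs := by
      by_contra hlt
      push_neg at hlt
      interval_cases hn : β.norm.natAbs
      · exact hβ0 ((Zsqrtd.norm_eq_zero two_nonsquare β).1 (Int.natAbs_eq_zero.1 hn))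
      · exact hu (Zsqrtd.norm_eq_one_iff.1 hn)
    obtain ⟨α', hspan, hbound⟩ := balancedAux _ α hα le_rfl
    have hα'0 : α' ≠ 0 := by
      intro h
      rw [h] at hspan
      have hm : α ∈ Ideal.span ({(0:Zsqrtd 2)} : Set (Zsqrtd 2)) := by
        rw [hspan]; exact Ideal.mem_span_singleton_self α
      exact hα (zero_dvd_iff.1 (Ideal.mem_span_singleton.1 hm))
    have hα'I : α' ∈ Ideal.span ({α} : Set (Zsqrtd 2)) := by
      rw [← hspan]; exact Ideal.mem_span_singleton_self α'
    have hminα' := hmin α' hα'I hα'0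
    -- AM-GM : lenSq2 γ ≥ 2 |norm γ|
    have hAM : 2 * |((γ.norm : ℤ) : ℝ)| ≤ Zsqrtd.lenSq2 γ := by
      rw [← toReal2_mul_toReal2', abs_mul, Zsqrtd.lenSq2]
      nlinarith [sq_nonneg (|γ.toReal2| - |γ.toReal2'|), sq_abs γ.toReal2, sq_abs γ.toReal2',
        abs_nonneg γ.toReal2, abs_nonneg γ.toReal2']
    have hnormγ : |((γ.norm : ℤ) : ℝ)| = |((β.norm : ℤ) : ℝ)| * |((α.norm : ℤ) : ℝ)| := by
      rw [← hβeq, Zsqrtd.norm_mul]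
      push_cast
      rw [abs_mul]
    have hβ2 : (2:ℝ) ≤ |((β.norm : ℤ) : ℝ)| := by
      have h3 : (2:ℤ) ≤ |β.norm| := by
        rw [Int.abs_eq_natAbs]; exact_mod_cast hnormβ
      rw [← Int.cast_abs]
      exact_mod_cast h3
    have hnormα0 : α.norm ≠ 0 := fun h => hα ((Zsqrtd.norm_eq_zero two_nonsquare α).1 h)
    have hαpos : (0:ℝ) < |((α.norm : ℤ) : ℝ)| := abs_pos.2 (Int.cast_ne_zero.2 hnormα0)
    have hslt : Real.sqrt 2 < 2 := by
      nlinarith [sqrt2_sq, Real.sqrt_nonneg 2]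
    nlinarith [hminα', hbound, hAM, hnormγ, hβ2, hαpos, hslt,
      mul_le_mul_of_nonneg_right hβ2 (le_of_lt hαpos)]
end

section
/- Let p be a prime with p ≡ 1 or 7 (mod 8) and let (a_p, b_p) be the minimal positive solution of a² - 2b² = p. Then a_p satisfies min(2a_p² - p, 6a_p² - 4√2·a_p·√(a_p² - p) - 3p) ≤ 2√2·p; in particular, the squared minimum of the lattice of the prime ideal (a_p + b_p√2) of ℤ[√2] under the canonical embedding, which equals 2·min(2a_p² - p, 2a_{-p}² + p), is at most 4√2·p. -/
/-!
Multiplying `a + b√2` by the unit `3 - 2√2` gives `(3a - 4b) + (3b - 2a)√2` of the same norm, which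
would be a smaller positive solution if `a < 2b`; so the minimal solution has `2b ≤ a`. Writing
`c = a - 2b`, this gives `c² ≤ c (a + 2b) = 2p - a²`, so `2c² + p ≤ 5p - 2a²`, and the two
candidates `2a² - p` and `2c² + p` have average at most `2p ≤ √2 · 2p`.
-/

lemma sq_sub_two_mul_sq_eq_sq_of_two_mul_eq {a b : ℤ} (h : 2 * a = 3 * b) :
    a ^ 2 - 2 * b ^ 2 = (a - b) ^ 2 := by
  linear_combination b * h

lemma two_mul_le_of_isLeast_sq_sub_two_mul_sq {n a b : ℤ} (hn : 0 < n) (hsq : ¬IsSquare n)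
    (ha : 0 < a) (hab : a ^ 2 - 2 * b ^ 2 = n)
    (hmin : ∀ a' b' : ℤ, 0 < a' → 0 < b' → a' ^ 2 - 2 * b' ^ 2 = n → a ≤ a') :
    2 * b ≤ a := by
  by_contra! hlt
  have hpos : 0 < 3 * a - 4 * b := by nlinarith
  have hne : 3 * b - 2 * a ≠ 0 := fun h ↦
    hsq ⟨a - b, by rw [← hab, sq_sub_two_mul_sq_eq_sq_of_two_mul_eq (by linarith), sq]⟩
  have hdesc : (3 * a - 4 * b) ^ 2 - 2 * |3 * b - 2 * a| ^ 2 = n := by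
    rw [sq_abs]; linear_combination hab
  linarith [hmin _ _ hpos (abs_pos.mpr hne) hdesc]

lemma min_le_two_mul_of_sq_sub_two_mul_sq_eq {n a b : ℤ} (hab : a ^ 2 - 2 * b ^ 2 = n)
    (hb : 0 ≤ b) (h2b : 2 * b ≤ a) :
    min (2 * a ^ 2 - n) (2 * (a - 2 * b) ^ 2 + n) ≤ 2 * n := by
  have hsq : (a - 2 * b) ^ 2 ≤ 2 * n - a ^ 2 := by
    nlinarith [mul_le_mul_of_nonneg_left (by linarith : a - 2 * b ≤ a + 2 * b)
      (by linarith : 0 ≤ a - 2 * b)]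
  rcases le_or_gt (2 * a ^ 2 - n) (2 * n) with h | h
  · exact min_le_of_left_le h
  · exact min_le_of_right_le (by linarith)

lemma six_mul_sq_sub_sqrt_eq {x y n : ℝ} (hxy : x ^ 2 - 2 * y ^ 2 = n) (hy : 0 ≤ y) :
    6 * x ^ 2 - 4 * √2 * x * √(x ^ 2 - n) - 3 * n = 2 * (x - 2 * y) ^ 2 + n := by
  have hsqrt : √(x ^ 2 - n) = √2 * y := by
    rw [← Real.sqrt_sq hy, ← Real.sqrt_mul zero_le_two]
    congr 1
    linarith
  rw [hsqrt]
  linear_combination (-4 * x * y) * Real.mul_self_sqrt zero_le_two + 4 * hxy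

theorem shortest_vector_upper_bound_Zsqrt2_general
    (p : ℕ) (hp : p.Prime)
    (a b : ℤ) (ha : 0 < a) (hb : 0 < b) (hab : a ^ 2 - 2 * b ^ 2 = (p : ℤ))
    (hmin : ∀ a' b' : ℤ, 0 < a' → 0 < b' → a' ^ 2 - 2 * b' ^ 2 = (p : ℤ) → a ≤ a') :
    min (2 * (a : ℝ) ^ 2 - p)
        (6 * (a : ℝ) ^ 2 - 4 * Real.sqrt 2 * a * Real.sqrt ((a : ℝ) ^ 2 - p) - 3 * p)
      ≤ 2 * Real.sqrt 2 * p ∧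
    2 * min (2 * (a : ℝ) ^ 2 - p) (2 * ((a : ℝ) - 2 * b) ^ 2 + p)
      ≤ 4 * Real.sqrt 2 * p := by
  have h2b : 2 * b ≤ a :=
    two_mul_le_of_isLeast_sq_sub_two_mul_sq (by exact_mod_cast hp.pos)
      (Nat.prime_iff_prime_int.mp hp).not_isSquare ha hab hmin
  have hZ := min_le_two_mul_of_sq_sub_two_mul_sq_eq hab hb.le h2b
  have hR : min (2 * (a : ℝ) ^ 2 - p) (2 * ((a : ℝ) - 2 * b) ^ 2 + p) ≤ 2 * √2 * p :=
    calc _ ≤ 2 * (p : ℝ) := by exact_mod_cast hZ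
      _ ≤ 2 * √2 * p := by nlinarith [Real.one_lt_sqrt_two, Nat.cast_nonneg (α := ℝ) p]
  rw [six_mul_sq_sub_sqrt_eq (y := b) (by exact_mod_cast hab) (by positivity)]
  exact ⟨hR, by linarith⟩

theorem shortest_vector_upper_bound_Zsqrt2
    (p : ℕ) (hp : p.Prime) (hp18 : p % 8 = 1 ∨ p % 8 = 7)
    (a b : ℤ) (ha : 0 < a) (hb : 0 < b) (hab : a ^ 2 - 2 * b ^ 2 = (p : ℤ))
    (hmin : ∀ a' b' : ℤ, 0 < a' → 0 < b' → a' ^ 2 - 2 * b' ^ 2 = (p : ℤ) → a ≤ a') :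
    min (2 * (a : ℝ) ^ 2 - p)
        (6 * (a : ℝ) ^ 2 - 4 * Real.sqrt 2 * a * Real.sqrt ((a : ℝ) ^ 2 - p) - 3 * p)
      ≤ 2 * Real.sqrt 2 * p ∧
    2 * min (2 * (a : ℝ) ^ 2 - p) (2 * ((a : ℝ) - 2 * b) ^ 2 + p)
      ≤ 4 * Real.sqrt 2 * p :=
  shortest_vector_upper_bound_Zsqrt2_general p hp a b ha hb hab hmin
end

section
/- Let p ≡ 1 or 7 (mod 8) be prime, and let 𝔭 = (a_p + b_p√2) be a prime ideal of ℤ[√2] above p, where (a_p, b_p) is the minimal positive solution of a² - 2b² = p. Then the minimum of γ² + τ(γ)² over nonzero γ ∈ 𝔭 equals 2·min(2a_p² - p, 2a_{-p}² + p), where a_{-p} = a_p - 2b_p. -/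
/-!
Write `γ = (a + b√2) β` with `β = u + v√2`. Then `lenSq2 γ / 2` is the positive definite binary
quadratic form `A u² + B u v + 2A v²` with `A = a² + 2b²`, `B = 8ab`, whose value at `(-1, 1)`,
i.e. at the generator `(a + b√2)(√2 - 1)`, is `3A - B = 2 a_{-p}² + p`. Minimality of `(a, b)`
forces `2b ≤ a` (otherwise the conjugate of `a + b√2` times `(1 + √2)²` is a smaller solution),
which gives `3B ≤ 8A`; in that range a unimodular change of variables brings the form to reduced
shape, where the minimum is the smaller outer coefficient.
-/

open Zsqrtd

theorem min_le_quadratic_form_of_abs_le {A B C : ℤ} (hBA : |B| ≤ A) (hBC : |B| ≤ C) {u v : ℤ}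
    (huv : u ≠ 0 ∨ v ≠ 0) : min A C ≤ A * u ^ 2 + B * u * v + C * v ^ 2 := by
  set m := min A C
  have hBm : |B| ≤ m := le_min hBA hBC
  have hcross : -(m * (|u| * |v|)) ≤ B * u * v := by
    have : -(|B| * (|u| * |v|)) ≤ B * u * v := by
      rw [← abs_mul, ← abs_mul, ← mul_assoc]; exact neg_abs_le _
    linarith [mul_le_mul_of_nonneg_right hBm (mul_nonneg (abs_nonneg u) (abs_nonneg v))]
  have hone : 1 ≤ u ^ 2 - |u| * |v| + v ^ 2 := by
    rw [← sq_abs u, ← sq_abs v]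
    rcases huv with hu | hv
    · have := abs_pos.2 hu; nlinarith [abs_nonneg v]
    · have := abs_pos.2 hv; nlinarith [abs_nonneg u]
  calc m ≤ m * (u ^ 2 - |u| * |v| + v ^ 2) :=
        le_mul_of_one_le_right ((abs_nonneg B).trans hBm) hone
    _ ≤ A * u ^ 2 + B * u * v + C * v ^ 2 := by
        nlinarith [min_le_left A C, min_le_right A C, sq_nonneg u, sq_nonneg v]

theorem min_le_quadratic_form_of_three_mul_le {A B : ℤ} (hB : 0 ≤ B) (hBA : 3 * B ≤ 8 * A)
    {u v : ℤ} (huv : u ≠ 0 ∨ v ≠ 0) :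
    min A (3 * A - B) ≤ A * u ^ 2 + B * u * v + 2 * A * v ^ 2 := by
  rcases le_or_gt B A with h₁ | h₁
  · have hred := min_le_quadratic_form_of_abs_le (A := A) (C := 2 * A)
      (by rwa [abs_of_nonneg hB]) (by rw [abs_of_nonneg hB]; linarith) huv
    rw [min_eq_left (by linarith)] at hred
    exact (min_le_left _ _).trans hred
  rcases le_or_gt (2 * B) (5 * A) with h₂ | h₂
  · have hred := min_le_quadratic_form_of_abs_le (A := A) (B := B - 2 * A) (C := 3 * A - B)
      (abs_le.2 ⟨by linarith, by linarith⟩) (abs_le.2 ⟨by linarith, by linarith⟩)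
      (u := u + v) (v := v) (by omega)
    convert hred using 1; ring
  · have hred := min_le_quadratic_form_of_abs_le (A := 6 * A - 2 * B) (B := 3 * B - 8 * A)
      (C := 3 * A - B) (abs_le.2 ⟨by linarith, by linarith⟩) (abs_le.2 ⟨by linarith, by linarith⟩)
      (u := u + v) (v := u + 2 * v) (by omega)
    rw [min_eq_right (by linarith)] at hred
    exact (min_le_right _ _).trans (hred.trans_eq (by ring))

theorem two_mul_le_of_minimal {p : ℕ} (hp : p.Prime) {a b : ℤ} (ha : 0 < a) (hb : 0 < b)
    (hab : a ^ 2 - 2 * b ^ 2 = p)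
    (hmin : ∀ a' b' : ℤ, 0 < a' → 0 < b' → a' ^ 2 - 2 * b' ^ 2 = p → a ≤ a') :
    2 * b ≤ a := by
  have hp0 : (0 : ℤ) < p := by exact_mod_cast hp.pos
  have h₃ : 0 < 3 * a - 4 * b := by nlinarith
  have hne : 2 * a - 3 * b ≠ 0 := by
    intro h
    exact (Nat.prime_iff_prime_int.mp hp).not_isSquare ⟨a - b, by linear_combination -hab + b * h⟩
  -- `(3a - 4b) + |2a - 3b|√2` is, up to sign of `√2`, the conjugate of `a + b√2` times `(1 + √2)²`
  have := hmin (3 * a - 4 * b) |2 * a - 3 * b| h₃ (abs_pos.2 hne)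
    (by rw [sq_abs]; linear_combination hab)
  linarith

theorem Zsqrtd.lenSq2_eq (z : ℤ√2) : lenSq2 z = ((2 * (z.re ^ 2 + 2 * z.im ^ 2) : ℤ) : ℝ) := by
  have h2 : Real.sqrt 2 ^ 2 = 2 := Real.sq_sqrt zero_le_two
  rw [lenSq2, toReal2, toReal2']
  push_cast
  linear_combination 2 * (z.im : ℝ) ^ 2 * h2

theorem Zsqrtd.min_lenSq2_le_lenSq2_mul {a b : ℤ} (hb : 0 < b) (hba : 2 * b ≤ a) {β : ℤ√2}
    (hβ : β ≠ 0) : min (lenSq2 ⟨a, b⟩) (lenSq2 ⟨2 * b - a, a - b⟩) ≤ lenSq2 (⟨a, b⟩ * β) := by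
  have huv : β.re ≠ 0 ∨ β.im ≠ 0 := by
    by_contra! h
    exact hβ (Zsqrtd.ext h.1 h.2)
  have ha : 0 < a := by linarith
  have hB : 0 ≤ 8 * a * b := by positivity
  have hBA : 3 * (8 * a * b) ≤ 8 * (a ^ 2 + 2 * b ^ 2) := by
    nlinarith [mul_nonneg (sub_nonneg.2 (by linarith : b ≤ a)) (sub_nonneg.2 hba)]
  have hform := min_le_quadratic_form_of_three_mul_le hB hBA huv
  rw [min_le_iff] at hform ⊢
  simp only [lenSq2_eq, Int.cast_le, re_mul, im_mul]
  exact hform.imp (fun h => by linarith) (fun h => by linarith)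

theorem shortest_vector_prime_ideal_Zsqrt2_general
    (p : ℕ) (hp : p.Prime)
    (a b : ℤ) (ha : 0 < a) (hb : 0 < b) (hab : a ^ 2 - 2 * b ^ 2 = (p : ℤ))
    (hmin : ∀ a' b' : ℤ, 0 < a' → 0 < b' → a' ^ 2 - 2 * b' ^ 2 = (p : ℤ) → a ≤ a') :
    IsLeast
      {r : ℝ | ∃ γ : Zsqrtd 2, γ ≠ 0 ∧
        γ ∈ Ideal.span ({(⟨a, b⟩ : Zsqrtd 2)} : Set (Zsqrtd 2)) ∧ r = Zsqrtd.lenSq2 γ}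
      (2 * min (2 * (a : ℝ) ^ 2 - p) (2 * ((a : ℝ) - 2 * b) ^ 2 + p)) := by
  have hba := two_mul_le_of_minimal hp ha hb hab hmin
  have hp' : (p : ℝ) = a ^ 2 - 2 * b ^ 2 := by exact_mod_cast hab.symm
  have hval : 2 * min (2 * (a : ℝ) ^ 2 - p) (2 * ((a : ℝ) - 2 * b) ^ 2 + p)
      = min (lenSq2 ⟨a, b⟩) (lenSq2 ⟨2 * b - a, a - b⟩) := by
    rw [mul_min_of_nonneg _ _ zero_le_two, lenSq2_eq, lenSq2_eq, hp']
    push_cast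
    congr 1 <;> ring
  rw [hval]
  refine ⟨?_, ?_⟩
  · rcases min_choice (lenSq2 ⟨a, b⟩) (lenSq2 ⟨2 * b - a, a - b⟩) with h | h <;> rw [h]
    · exact ⟨_, fun h0 => hb.ne' (congrArg Zsqrtd.im h0), Ideal.mem_span_singleton_self _, rfl⟩
    · refine ⟨_, fun h0 => ?_, Ideal.mem_span_singleton.2 ⟨⟨-1, 1⟩, ?_⟩, rfl⟩
      · have : a - b = 0 := congrArg Zsqrtd.im h0
        omega
      · ext <;> simp only [re_mul, im_mul] <;> ring
  · rintro _ ⟨γ, hγ, hmem, rfl⟩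
    obtain ⟨β, rfl⟩ := Ideal.mem_span_singleton.1 hmem
    exact min_lenSq2_le_lenSq2_mul hb hba (right_ne_zero_of_mul hγ)

theorem shortest_vector_prime_ideal_Zsqrt2
    (p : ℕ) (hp : p.Prime) (hp18 : p % 8 = 1 ∨ p % 8 = 7)
    (a b : ℤ) (ha : 0 < a) (hb : 0 < b) (hab : a ^ 2 - 2 * b ^ 2 = (p : ℤ))
    (hmin : ∀ a' b' : ℤ, 0 < a' → 0 < b' → a' ^ 2 - 2 * b' ^ 2 = (p : ℤ) → a ≤ a') :
    IsLeast
      {r : ℝ | ∃ γ : Zsqrtd 2, γ ≠ 0 ∧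
        γ ∈ Ideal.span ({(⟨a, b⟩ : Zsqrtd 2)} : Set (Zsqrtd 2)) ∧ r = Zsqrtd.lenSq2 γ}
      (2 * min (2 * (a : ℝ) ^ 2 - p) (2 * ((a : ℝ) - 2 * b) ^ 2 + p)) :=
  shortest_vector_prime_ideal_Zsqrt2_general p hp a b ha hb hab hmin
end

section
/- Let x, y be integers with x ≥ 1, x + y√2 > 0, and x - y√2 > 0, and let a, b be positive reals with a ≥ 2b and a > b√2. Then 4ax + 8by ≥ 4a. -/
/-! Since `√2 ≥ 1`, positivity of `x + y√2` with `x ≥ 1` forces `-y ≤ x - 1` for integers, and then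
`a (x - 1) ≥ 2b (x - 1) ≥ -2b y` because `a ≥ 2b ≥ 0`. -/

theorem neg_lt_of_add_mul_sqrt_two_pos {x y : ℝ} (hy : y ≤ 0) (h : 0 < x + y * √2) : -y < x := by
  have hsqrt : 1 ≤ √2 := Real.one_le_sqrt.mpr one_le_two
  calc -y ≤ -y * √2 := le_mul_of_one_le_right (neg_nonneg.mpr hy) hsqrt
    _ < x := by linarith

theorem Int.neg_lt_of_add_mul_sqrt_two_pos {x y : ℤ} (hx : 1 ≤ x) (h : 0 < (x : ℝ) + y * √2) :
    -y < x := by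
  rcases le_or_gt 0 y with hy | hy
  · omega
  · exact_mod_cast _root_.neg_lt_of_add_mul_sqrt_two_pos (by exact_mod_cast hy.le) h

theorem add_two_mul_mul_nonneg_of_neg_le {a b u y : ℝ} (hb : 0 ≤ b) (hab : 2 * b ≤ a)
    (hu : 0 ≤ u) (hyu : -y ≤ u) : 0 ≤ a * u + 2 * b * y := by
  have hau : 2 * b * u ≤ a * u := mul_le_mul_of_nonneg_right hab hu
  have hbu : 2 * b * -y ≤ 2 * b * u := mul_le_mul_of_nonneg_left hyu (by positivity)
  linarith

theorem core_inequality_p7mod16_general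
    (x y : ℤ) (hx : 1 ≤ x)
    (hxy1 : 0 < (x : ℝ) + y * Real.sqrt 2)
    (a b : ℝ) (hb : 0 < b)
    (hab : 2 * b ≤ a) :
    4 * a ≤ 4 * a * x + 8 * b * y := by
  have hyx : -y ≤ x - 1 := by
    have := Int.neg_lt_of_add_mul_sqrt_two_pos hx hxy1
    omega
  have key := add_two_mul_mul_nonneg_of_neg_le (u := ((x - 1 : ℤ) : ℝ)) (y := y) hb.le hab
    (by exact_mod_cast (by omega : (0 : ℤ) ≤ x - 1)) (by exact_mod_cast hyx)
  push_cast at key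
  linarith

theorem core_inequality_p7mod16
    (x y : ℤ) (hx : 1 ≤ x)
    (hxy1 : 0 < (x : ℝ) + y * Real.sqrt 2)
    (hxy2 : 0 < (x : ℝ) - y * Real.sqrt 2)
    (a b : ℝ) (ha : 0 < a) (hb : 0 < b)
    (hab : 2 * b ≤ a) (hab2 : b * Real.sqrt 2 < a) :
    4 * a ≤ 4 * a * x + 8 * b * y :=
  core_inequality_p7mod16_general x y hx hxy1 a b hb hab
end
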